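/- arXiv:math-ph/0404060 — 5 statements merged into one kernel-verified Lean document; each statement's English description precedes it below -/
import Mathlib

section
/- On the unit 2-sphere S²(1) with the uniform magnetic field F = μΩ₂ (μ ≠ 0), every normal (unit-speed) magnetic curve is a circle of Euclidean radius r = 1/√(1+μ²) < 1; consequently, no two antipodal points of S² can be joined by a normal magnetic curve of (S², g, μΩ₂). -/
open RealInnerProductSpace

/-- The cross product on `ℝ³ = EuclideanSpace ℝ (Fin 3)`. -/
noncomputable def cross3 (u v : EuclideanSpace ℝ (Fin 3)) : EuclideanSpace ℝ (Fin 3) :=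
  (WithLp.equiv 2 (Fin 3 → ℝ)).symm
    ![u 1 * v 2 - u 2 * v 1, u 2 * v 0 - u 0 * v 2, u 0 * v 1 - u 1 * v 0]

/-!
The vector `μ γ + γ × γ'` is a first integral: by the BAC–CAB rule its derivative is
`μ γ' + μ γ × (γ × γ') = μ γ' + μ (⟪γ, γ'⟫ γ - ‖γ‖² γ') = 0`, since `‖γ‖ = 1` forces `γ ⟂ γ'`.
For `c = μ/(1+μ²) (μ γ + γ × γ')` one has `(1+μ²)(γ - c) = γ - μ γ × γ'`, and `γ`, `γ × γ'`
are orthonormal, so `‖γ - c‖ = 1/√(1+μ²) < 1`. Two points of a sphere of radius `r < 1` are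
less than `2` apart, while antipodal points of `S²` are exactly `2` apart.
-/

open Matrix WithLp

section InnerProductSpace

variable {F : Type*} [NormedAddCommGroup F] [InnerProductSpace ℝ F]

theorem inner_eq_zero_of_hasDerivAt_of_norm_eq {γ γ' : ℝ → F} {R : ℝ}
    (hγ : ∀ t, HasDerivAt γ (γ' t) t) (hnorm : ∀ t, ‖γ t‖ = R) (t : ℝ) :
    ⟪γ t, γ' t⟫ = 0 := by
  have hconst : HasDerivAt (‖γ ·‖ ^ 2) 0 t := by
    simp only [hnorm]
    exact hasDerivAt_const t _
  simpa using (hγ t).norm_sq.unique hconst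

theorem ne_neg_of_norm_sub_eq_of_lt_one {a b c : F} {r : ℝ} (ha : ‖a - c‖ = r)
    (hb : ‖b - c‖ = r) (hb1 : ‖b‖ = 1) (hr : r < 1) : a ≠ -b := by
  rintro rfl
  have hdiam : ‖-b - b‖ = 2 := by
    rw [← neg_add', norm_neg, ← two_smul ℝ, norm_smul, hb1]
    norm_num
  have := norm_sub_le_norm_sub_add_norm_sub (-b) c b
  rw [hdiam, ha, norm_sub_rev, hb] at this
  linarith

end InnerProductSpace

theorem EuclideanSpace.real_inner_eq_dotProduct {ι : Type*} [Fintype ι]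
    (u v : EuclideanSpace ℝ ι) : ⟪u, v⟫ = ofLp u ⬝ᵥ ofLp v := by
  rw [EuclideanSpace.inner_eq_star_dotProduct, star_trivial, dotProduct_comm]

local notation "E³" => EuclideanSpace ℝ (Fin 3)

section Cross3

open EuclideanSpace

theorem cross3_eq_toLp_crossProduct (u v : E³) : cross3 u v = toLp 2 (ofLp u ⨯₃ ofLp v) :=
  rfl

theorem cross3_self (u : E³) : cross3 u u = 0 := by
  rw [cross3_eq_toLp_crossProduct, cross_self]
  rfl

theorem inner_cross3_self (u v : E³) : ⟪u, cross3 u v⟫ = 0 := by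
  rw [real_inner_eq_dotProduct, cross3_eq_toLp_crossProduct]
  exact dot_self_cross _ _

theorem cross3_cross3 (u v w : E³) : cross3 u (cross3 v w) = ⟪u, w⟫ • v - ⟪u, v⟫ • w := by
  simp only [cross3_eq_toLp_crossProduct, real_inner_eq_dotProduct,
    cross_cross_eq_smul_sub_smul', dotProduct_comm (ofLp v)]
  rfl

theorem inner_cross3_cross3 (u v w x : E³) :
    ⟪cross3 u v, cross3 w x⟫ = ⟪u, w⟫ * ⟪v, x⟫ - ⟪u, x⟫ * ⟪v, w⟫ := by
  simp only [cross3_eq_toLp_crossProduct, real_inner_eq_dotProduct]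
  exact cross_dot_cross _ _ _ _

theorem norm_cross3_sq (u v : E³) : ‖cross3 u v‖ ^ 2 = ‖u‖ ^ 2 * ‖v‖ ^ 2 - ⟪u, v⟫ ^ 2 := by
  rw [← real_inner_self_eq_norm_sq, inner_cross3_cross3, real_inner_self_eq_norm_sq,
    real_inner_self_eq_norm_sq, real_inner_comm v u]
  ring

/-- The cross product on `ℝ³ = EuclideanSpace ℝ (Fin 3)`. -/
noncomputable def cross3CLM : E³ →L[ℝ] E³ →L[ℝ] E³ :=
  LinearMap.toContinuousLinearMap (LinearMap.toContinuousLinearMap.toLinearMap ∘ₗ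
    ((crossProduct.compl₁₂ (WithLp.linearEquiv 2 ℝ (Fin 3 → ℝ)).toLinearMap
      (WithLp.linearEquiv 2 ℝ (Fin 3 → ℝ)).toLinearMap).compr₂
        (WithLp.linearEquiv 2 ℝ (Fin 3 → ℝ)).symm.toLinearMap))

theorem cross3CLM_apply (u v : E³) : cross3CLM u v = cross3 u v :=
  rfl

theorem cross3_sub_right (u v w : E³) : cross3 u (v - w) = cross3 u v - cross3 u w :=
  (cross3CLM u).map_sub v w

theorem cross3_smul_right (a : ℝ) (u v : E³) : cross3 u (a • v) = a • cross3 u v :=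
  (cross3CLM u).map_smul a v

theorem HasDerivAt.cross3 {u v : ℝ → E³} {u' v' : E³} {t : ℝ} (hu : HasDerivAt u u' t)
    (hv : HasDerivAt v v' t) :
    HasDerivAt (fun s ↦ _root_.cross3 (u s) (v s))
      (_root_.cross3 (u t) v' + _root_.cross3 u' (v t)) t :=
  cross3CLM.hasDerivAt_of_bilinear (fun _ ↦ hu) (fun _ ↦ hv)

end Cross3

noncomputable def magneticAxis (μ : ℝ) (x v : E³) : E³ :=
  μ • x + cross3 x v

theorem hasDerivAt_magneticAxis {μ : ℝ} {γ γ' : ℝ → E³} {a : E³} {t : ℝ}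
    (hγ : HasDerivAt γ (γ' t) t) (hγ' : HasDerivAt γ' a t) (hnorm : ‖γ t‖ = 1)
    (horth : ⟪γ t, γ' t⟫ = 0) (hmag : a = μ • cross3 (γ t) (γ' t) - γ t) :
    HasDerivAt (fun s ↦ magneticAxis μ (γ s) (γ' s)) 0 t := by
  refine ((hγ.const_smul μ).add (hγ.cross3 hγ')).congr_deriv ?_
  rw [hmag, cross3_sub_right, cross3_smul_right, cross3_cross3, cross3_self, cross3_self,
    horth, real_inner_self_eq_norm_sq, hnorm]
  simp

theorem magneticAxis_eq_of_magnetic {μ : ℝ} {γ γ' γ'' : ℝ → E³}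
    (hsphere : ∀ t, ‖γ t‖ = 1) (hγ : ∀ t, HasDerivAt γ (γ' t) t)
    (hγ' : ∀ t, HasDerivAt γ' (γ'' t) t) (hmag : ∀ t, γ'' t = μ • cross3 (γ t) (γ' t) - γ t)
    (t s : ℝ) : magneticAxis μ (γ t) (γ' t) = magneticAxis μ (γ s) (γ' s) := by
  have hderiv (t : ℝ) : HasDerivAt (fun s ↦ magneticAxis μ (γ s) (γ' s)) 0 t :=
    hasDerivAt_magneticAxis (hγ t) (hγ' t) (hsphere t)
      (inner_eq_zero_of_hasDerivAt_of_norm_eq hγ hsphere t) (hmag t)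
  exact is_const_of_deriv_eq_zero (fun t ↦ (hderiv t).differentiableAt)
    (fun t ↦ (hderiv t).deriv) t s

theorem norm_sub_smul_magneticAxis (μ : ℝ) {x v : E³} (hx : ‖x‖ = 1) (hv : ‖v‖ = 1)
    (hxv : ⟪x, v⟫ = 0) :
    ‖x - (μ / (1 + μ ^ 2)) • magneticAxis μ x v‖ = 1 / √(1 + μ ^ 2) := by
  have hpos : 0 < 1 + μ ^ 2 := by positivity
  have hcross : ‖cross3 x v‖ = 1 := by
    have := norm_cross3_sq x v
    rw [hx, hv, hxv] at this
    exact (pow_left_inj₀ (norm_nonneg _) zero_le_one two_ne_zero).1 (by simpa using this)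
  have hrot : ‖x - μ • cross3 x v‖ = √(1 + μ ^ 2) := by
    rw [← Real.sqrt_sq (norm_nonneg _), norm_sub_sq_real, real_inner_smul_right,
      inner_cross3_self, norm_smul, hx, hcross, Real.norm_eq_abs, mul_one, sq_abs]
    ring_nf
  have hscale : x - (μ / (1 + μ ^ 2)) • magneticAxis μ x v
      = (1 + μ ^ 2)⁻¹ • (x - μ • cross3 x v) := by
    unfold magneticAxis
    match_scalars
    · field_simp
      ring
    · field_simp
  rw [hscale, norm_smul, hrot, Real.norm_eq_abs, abs_of_pos (inv_pos.2 hpos)]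
  field_simp
  exact Real.sq_sqrt hpos.le

theorem one_div_sqrt_one_add_sq_lt_one {μ : ℝ} (hμ : μ ≠ 0) : 1 / √(1 + μ ^ 2) < 1 := by
  have hgt : 1 < √(1 + μ ^ 2) := Real.lt_sqrt_of_sq_lt (by simpa using pow_pos (abs_pos.2 hμ) 2)
  exact (div_lt_one (zero_lt_one.trans hgt)).2 hgt

/-- On the unit sphere `S²(1)` with the uniform magnetic field `μ Ω₂`, `μ ≠ 0`,
every normal (unit-speed) magnetic curve — i.e. a unit-speed spherical curve with
`γ'' = μ (γ × γ') - γ` — is a circle of Euclidean radius `r = 1/√(1+μ²) < 1`;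
consequently it never joins two antipodal points. -/
theorem sphere_magnetic_curves_are_small_circles
    (μ : ℝ) (hμ : μ ≠ 0)
    (γ γ' γ'' : ℝ → EuclideanSpace ℝ (Fin 3))
    (hsphere : ∀ t, ‖γ t‖ = 1)
    (hγ : ∀ t, HasDerivAt γ (γ' t) t)
    (hγ' : ∀ t, HasDerivAt γ' (γ'' t) t)
    (hunit : ∀ t, ‖γ' t‖ = 1)
    (hmag : ∀ t, γ'' t = μ • cross3 (γ t) (γ' t) - γ t) :
    (∃ c : EuclideanSpace ℝ (Fin 3),
      ∀ t, ‖γ t - c‖ = 1 / Real.sqrt (1 + μ ^ 2)) ∧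
    1 / Real.sqrt (1 + μ ^ 2) < 1 ∧
    (∀ t s : ℝ, γ t ≠ -γ s) := by
  have hradius (t : ℝ) :
      ‖γ t - (μ / (1 + μ ^ 2)) • magneticAxis μ (γ 0) (γ' 0)‖ = 1 / √(1 + μ ^ 2) := by
    rw [← magneticAxis_eq_of_magnetic hsphere hγ hγ' hmag t 0]
    exact norm_sub_smul_magneticAxis μ (hsphere t) (hunit t)
      (inner_eq_zero_of_hasDerivAt_of_norm_eq hγ hsphere t)
  have hsmall := one_div_sqrt_one_add_sq_lt_one hμ
  exact ⟨⟨_, hradius⟩, hsmall, fun t s ↦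
    ne_neg_of_norm_sub_eq_of_lt_one (hradius t) (hradius s) (hsphere s) hsmall⟩
end

section
/- Let M_α be a surface of revolution with arclength-parametrized profile (f,h), f > 0, and let F = μΩ₂ be a uniform magnetic field. All parallels of M_α are normal magnetic flowlines of F if and only if f'(s) = μ f(s) for all s, in which case either μ = 0 and f is constant (right circular cylinder), or μ ≠ 0 and the Gauss curvature is constant equal to −μ² (bugle surface). -/
/-- All parallels of a surface of revolution (arclength profile `(f,h)`, `f>0`,
Gauss curvature `G = -f''/f`, parallel geodesic curvature `f'/f`) are normal
magnetic flowlines of the uniform magnetic field `μ Ω₂` iff `f' = μ f`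
everywhere; in that case either `μ = 0` and `f` is constant (right circular
cylinder), or `μ ≠ 0` and the Gauss curvature is constant `-μ²` (bugle
surface). -/
theorem all_parallels_magnetic_uniform
    (f : ℝ → ℝ) (μ : ℝ)
    (hf : ContDiff ℝ 2 f) (hfpos : ∀ s, 0 < f s) :
    ((∀ s, deriv f s / f s = μ) ↔ (∀ s, deriv f s = μ * f s)) ∧
    ((∀ s, deriv f s = μ * f s) →
      ((μ = 0 → ∀ s t, f s = f t) ∧
       (μ ≠ 0 → ∀ s, -(deriv (deriv f) s) / f s = -μ ^ 2))) := by
  have hdiff : Differentiable ℝ f := hf.differentiable (by norm_num)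
  constructor
  · constructor
    · intro h s
      have := h s
      field_simp [(hfpos s).ne'] at this
      linarith [this]
    · intro h s
      rw [h s]
      field_simp [(hfpos s).ne']
  · intro h
    constructor
    · intro hμ s t
      apply is_const_of_deriv_eq_zero hdiff
      intro x
      rw [h x, hμ, zero_mul]
    · intro hμ s
      have hfe : deriv f = fun x => μ * f x := funext h
      have : deriv (deriv f) s = μ * deriv f s := by
        rw [hfe, deriv_const_mul _ (hdiff s)]; rw [h s]
      rw [this, h s]
      field_simp [(hfpos s).ne']
end

section
/- Consider the torus of revolution T(r,R), 0 < r < R, with profile f(s) = R + r cos(s/r), s ∈ [0,2πr], and a uniform magnetic field μΩ₂. Set H_μ(s) = Rμ + rμ cos(s/r) + sin(s/r) and ρ = (R² − r²)^{−1/2}. Then the set Γ_μ = {s : H_μ(s) = 0} of normal magnetic parallels is nonempty if and only if μ ∈ [−ρ, ρ]. -/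
set_option maxHeartbeats 1000000


/-- On the torus of revolution `T(r,R)`, `0 < r < R`, with profile
`f(s) = R + r cos(s/r)` and uniform magnetic field `μ Ω₂`, the set of normal
magnetic parallels `Γ_μ = {s ∈ [0,2πr] : H_μ(s) = 0}`, where
`H_μ(s) = Rμ + rμ cos(s/r) + sin(s/r)`, is nonempty iff `μ ∈ [-ρ,ρ]` with
`ρ = (R² - r²)^{-1/2}`. -/
theorem torus_magnetic_parallels_exist_iff
    (r R μ : ℝ) (hr : 0 < r) (hrR : r < R) :
    (∃ s ∈ Set.Icc 0 (2 * Real.pi * r),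
        R * μ + r * μ * Real.cos (s / r) + Real.sin (s / r) = 0) ↔
      μ ∈ Set.Icc (-(R ^ 2 - r ^ 2) ^ (-(1:ℝ)/2)) ((R ^ 2 - r ^ 2) ^ (-(1:ℝ)/2)) := by
  have hd : (0:ℝ) < R ^ 2 - r ^ 2 := by nlinarith
  have hρeq : (R ^ 2 - r ^ 2) ^ (-(1:ℝ)/2) = (Real.sqrt (R ^ 2 - r ^ 2))⁻¹ := by
    rw [show -(1:ℝ)/2 = -(1/2) by ring, Real.rpow_neg hd.le, ← Real.sqrt_eq_rpow]
  set ρ := (R ^ 2 - r ^ 2) ^ (-(1:ℝ)/2) with hρdef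
  have hρpos : 0 < ρ := by rw [hρeq]; positivity
  have hρsq : ρ ^ 2 * (R ^ 2 - r ^ 2) = 1 := by
    rw [hρeq, ← Real.sqrt_inv, Real.sq_sqrt (by positivity)]
    field_simp
  constructor
  · rintro ⟨s, _, heq⟩
    have hpyth := Real.sin_sq_add_cos_sq (s / r)
    have hR2 : (R * μ) ^ 2 = (r * μ * Real.cos (s / r) + Real.sin (s / r)) ^ 2 := by
      have : R * μ = -(r * μ * Real.cos (s / r) + Real.sin (s / r)) := by linarith
      rw [this]; ring
    have hid : (r * μ * Real.cos (s / r) + Real.sin (s / r)) ^ 2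
        + (r * μ * Real.sin (s / r) - Real.cos (s / r)) ^ 2
        = r ^ 2 * μ ^ 2 * (Real.sin (s / r) ^ 2 + Real.cos (s / r) ^ 2)
          + (Real.sin (s / r) ^ 2 + Real.cos (s / r) ^ 2) := by ring
    rw [hpyth] at hid
    have key : μ ^ 2 * (R ^ 2 - r ^ 2) ≤ 1 := by
      nlinarith [sq_nonneg (r * μ * Real.sin (s / r) - Real.cos (s / r))]
    have hμsq : μ ^ 2 ≤ ρ ^ 2 := by nlinarith
    constructor
    · nlinarith [sq_nonneg (μ + ρ)]
    · nlinarith [sq_nonneg (μ - ρ)]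
  · rintro ⟨h1, h2⟩
    have hsq : μ ^ 2 ≤ ρ ^ 2 := by nlinarith
    have hμsq : μ ^ 2 * (R ^ 2 - r ^ 2) ≤ 1 := by
      nlinarith [mul_le_mul_of_nonneg_right hsq hd.le]
    set A := Real.sqrt (1 + r ^ 2 * μ ^ 2) with hA
    have hApos : 0 < A := Real.sqrt_pos.2 (by positivity)
    have hAsq : A ^ 2 = 1 + r ^ 2 * μ ^ 2 := Real.sq_sqrt (by positivity)
    have hx1 : -1 ≤ r * μ / A := by
      rw [le_div_iff₀ hApos]; nlinarith [sq_nonneg (r * μ + A)]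
    have hx2 : r * μ / A ≤ 1 := by
      rw [div_le_one hApos]; nlinarith [sq_nonneg (r * μ - A)]
    set t₀ := Real.arccos (r * μ / A) with ht₀
    have hcos : Real.cos t₀ = r * μ / A := Real.cos_arccos hx1 hx2
    have hsin : Real.sin t₀ = 1 / A := by
      rw [ht₀, Real.sin_arccos]
      have h : 1 - (r * μ / A) ^ 2 = (1 / A) ^ 2 := by
        have hA0 : A ≠ 0 := hApos.ne'
        field_simp
        linarith
      rw [h, Real.sqrt_sq (by positivity)]
    set F : ℝ → ℝ := fun t => R * μ + r * μ * Real.cos t + Real.sin t with hF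
    have hFt₀ : F t₀ = R * μ + A := by
      simp only [hF, hcos, hsin]
      have hA0 : A ≠ 0 := hApos.ne'
      field_simp
      linarith
    have hFt₁ : F (t₀ + Real.pi) = R * μ - A := by
      simp only [hF, Real.cos_add_pi, Real.sin_add_pi, hcos, hsin]
      have hA0 : A ≠ 0 := hApos.ne'
      field_simp
      linarith
    have hcont : ContinuousOn F (Set.Icc t₀ (t₀ + Real.pi)) :=
      Continuous.continuousOn ((continuous_const.add (continuous_const.mul Real.continuous_cos)).add Real.continuous_sin)
    have hsub := intermediate_value_Icc' (by linarith [Real.pi_pos]) hcont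
    have h0mem : (0:ℝ) ∈ Set.Icc (F (t₀ + Real.pi)) (F t₀) := by
      rw [hFt₀, hFt₁]
      constructor
      · nlinarith [sq_nonneg (R * μ + A)]
      · nlinarith [sq_nonneg (R * μ - A)]
    obtain ⟨t, ht, hFt⟩ := hsub h0mem
    have hrt : r * t / r = t := by field_simp
    have ht0nn : 0 ≤ t₀ := Real.arccos_nonneg _
    have ht0le : t₀ ≤ Real.pi := Real.arccos_le_pi _
    refine ⟨r * t, ⟨by nlinarith [ht.1], by nlinarith [ht.2, Real.pi_pos]⟩, ?_⟩
    rw [hrt]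
    exact hFt
end

section
/- For the torus of revolution T(r,R) and uniform magnetic field μΩ₂ with 0 < |μ| < ρ = (R²−r²)^{−1/2}, the function H_μ(s) = Rμ + rμ cos(s/r) + sin(s/r) on [0, 2πr) has exactly two zeros; i.e., there are exactly two normal magnetic parallels. -/
open Real Set

private lemma circle_injOn {θ₁ θ₂ : ℝ} (h₁ : θ₁ ∈ Set.Ico 0 (2 * π))
    (h₂ : θ₂ ∈ Set.Ico 0 (2 * π)) (hc : Real.cos θ₁ = Real.cos θ₂)
    (hs : Real.sin θ₁ = Real.sin θ₂) : θ₁ = θ₂ := by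
  have h : Real.cos (θ₁ - θ₂) = 1 := by
    rw [Real.cos_sub, hc, hs]
    rw [← Real.sin_sq_add_cos_sq θ₂]; ring
  have h1 : -(2 * π) < θ₁ - θ₂ := by linarith [h₁.1, h₁.2, h₂.1, h₂.2]
  have h2 : θ₁ - θ₂ < 2 * π := by linarith [h₁.1, h₁.2, h₂.1, h₂.2]
  have := (Real.cos_eq_one_iff_of_lt_of_lt h1 h2).mp h
  linarith

private lemma circle_exists {x y : ℝ} (h : x ^ 2 + y ^ 2 = 1) :
    ∃ θ ∈ Set.Ico 0 (2 * π), Real.cos θ = x ∧ Real.sin θ = y := by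
  have hx1 : -1 ≤ x := by nlinarith [sq_nonneg y]
  have hx2 : x ≤ 1 := by nlinarith [sq_nonneg y]
  have hpi := Real.pi_pos
  have hmem : Real.arccos x ∈ Set.Icc 0 π := ⟨Real.arccos_nonneg x, Real.arccos_le_pi x⟩
  have hsin : Real.sin (Real.arccos x) = Real.sqrt (1 - x ^ 2) := Real.sin_arccos x
  have hy2 : Real.sqrt (1 - x ^ 2) = |y| := by
    rw [show 1 - x ^ 2 = y ^ 2 by linarith, Real.sqrt_sq_eq_abs]
  rcases le_or_gt 0 y with hy | hy
  · exact ⟨Real.arccos x, ⟨hmem.1, lt_of_le_of_lt hmem.2 (by linarith)⟩,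
      Real.cos_arccos hx1 hx2, by rw [hsin, hy2, abs_of_nonneg hy]⟩
  · refine ⟨2 * π - Real.arccos x, ⟨by linarith [hmem.2], ?_⟩, ?_, ?_⟩
    · have : 0 < Real.arccos x := by
        rcases lt_or_eq_of_le (Real.arccos_nonneg x) with h | h
        · exact h
        · exfalso
          have : Real.cos (Real.arccos x) = 1 := by rw [← h]; simp
          rw [Real.cos_arccos hx1 hx2] at this
          have : y = 0 := by nlinarith
          linarith
      linarith
    · rw [Real.cos_sub, Real.cos_two_pi, Real.sin_two_pi, Real.cos_arccos hx1 hx2]; ring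
    · rw [Real.sin_sub, Real.cos_two_pi, Real.sin_two_pi, hsin, hy2, abs_of_neg hy]; ring

set_option maxHeartbeats 1000000 in
/-- On the torus of revolution `T(r,R)` with uniform magnetic field `μ Ω₂`,
if `0 < |μ| < ρ = (R²-r²)^{-1/2}` then `H_μ(s) = Rμ + rμ cos(s/r) + sin(s/r)`
has exactly two zeroes on `[0, 2πr)`: exactly two normal magnetic parallels. -/
theorem torus_exactly_two_magnetic_parallels
    (r R μ : ℝ) (hr : 0 < r) (hrR : r < R)
    (hμ0 : μ ≠ 0) (hμ : |μ| < (R ^ 2 - r ^ 2) ^ (-(1:ℝ)/2)) :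
    {s ∈ Set.Ico 0 (2 * Real.pi * r) |
      R * μ + r * μ * Real.cos (s / r) + Real.sin (s / r) = 0}.encard = 2 := by
  have hpi := Real.pi_pos
  set a := r * μ with ha
  set d := R * μ with hd
  -- D > 0
  have hR2 : (0:ℝ) < R ^ 2 - r ^ 2 := by nlinarith
  have hμsq : μ ^ 2 * (R ^ 2 - r ^ 2) < 1 := by
    have h1 : |μ| ^ 2 < ((R ^ 2 - r ^ 2) ^ (-(1:ℝ)/2)) ^ 2 := by
      apply pow_lt_pow_left₀ hμ (abs_nonneg μ)
      norm_num
    rw [sq_abs] at h1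
    have h2 : ((R ^ 2 - r ^ 2) ^ (-(1:ℝ)/2)) ^ 2 = (R ^ 2 - r ^ 2)⁻¹ := by
      rw [← Real.rpow_natCast ((R ^ 2 - r ^ 2) ^ (-(1:ℝ)/2)) 2,
        ← Real.rpow_mul hR2.le]
      norm_num [Real.rpow_neg_one]
    rw [h2] at h1
    calc μ ^ 2 * (R ^ 2 - r ^ 2) < (R ^ 2 - r ^ 2)⁻¹ * (R ^ 2 - r ^ 2) := by
          exact mul_lt_mul_of_pos_right h1 hR2
      _ = 1 := inv_mul_cancel₀ hR2.ne'
  have hD : 0 < 1 + a ^ 2 - d ^ 2 := by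
    have : d ^ 2 - a ^ 2 = μ ^ 2 * (R ^ 2 - r ^ 2) := by rw [ha, hd]; ring
    nlinarith
  set D := 1 + a ^ 2 - d ^ 2 with hDdef
  have hA : (0:ℝ) < 1 + a ^ 2 := by positivity
  set x₁ := (-(a * d) + Real.sqrt D) / (1 + a ^ 2) with hx₁
  set x₂ := (-(a * d) - Real.sqrt D) / (1 + a ^ 2) with hx₂
  have hsD : 0 < Real.sqrt D := Real.sqrt_pos.mpr hD
  have hsD2 : Real.sqrt D ^ 2 = D := Real.sq_sqrt hD.le
  have hx12 : x₁ ≠ x₂ := by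
    intro h
    rw [hx₁, hx₂, div_eq_div_iff hA.ne' hA.ne'] at h
    nlinarith
  -- factorization of the quadratic
  have hfact : ∀ x : ℝ, (1 + a ^ 2) * x ^ 2 + 2 * (a * d) * x + d ^ 2 - 1
      = (1 + a ^ 2) * (x - x₁) * (x - x₂) := by
    intro x
    rw [hx₁, hx₂]
    field_simp
    nlinarith [hsD2]
  -- the θ-set
  set Sθ : Set ℝ := {θ ∈ Set.Ico 0 (2 * π) | d + a * Real.cos θ + Real.sin θ = 0} with hSθ
  have himg : Real.cos '' Sθ = {x₁, x₂} := by
    ext x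
    simp only [Set.mem_insert_iff, Set.mem_singleton_iff]
    constructor
    · rintro ⟨θ, ⟨hθI, hθ⟩, rfl⟩
      have hpyth := Real.sin_sq_add_cos_sq θ
      have hq : (1 + a ^ 2) * Real.cos θ ^ 2 + 2 * (a * d) * Real.cos θ + d ^ 2 - 1 = 0 := by
        have hs : Real.sin θ = -(d + a * Real.cos θ) := by linarith
        linear_combination hpyth + (a * Real.cos θ + d - Real.sin θ) * hs
      rw [hfact] at hq
      rcases mul_eq_zero.mp hq with h | h
      · rcases mul_eq_zero.mp h with h | h
        · exact absurd h hA.ne'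
        · left; linarith
      · right; linarith
    · intro hx
      have hq : (1 + a ^ 2) * x ^ 2 + 2 * (a * d) * x + d ^ 2 - 1 = 0 := by
        rw [hfact]
        rcases hx with h | h <;> rw [h] <;> ring
      have hcirc : x ^ 2 + (-(d + a * x)) ^ 2 = 1 := by nlinarith
      obtain ⟨θ, hθI, hc, hs⟩ := circle_exists hcirc
      exact ⟨θ, ⟨hθI, by rw [hc, hs]; ring⟩, hc⟩
  have hinj : Set.InjOn Real.cos Sθ := by
    rintro θ₁ ⟨h₁I, h₁⟩ θ₂ ⟨h₂I, h₂⟩ hc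
    apply circle_injOn h₁I h₂I hc
    have : Real.sin θ₁ = -(d + a * Real.cos θ₁) := by linarith
    rw [this, hc]; linarith
  have hcard : Sθ.encard = 2 := by
    rw [← hinj.encard_image, himg, Set.encard_pair hx12]
  -- transfer to the s-set
  have hset : {s ∈ Set.Ico 0 (2 * Real.pi * r) |
      R * μ + r * μ * Real.cos (s / r) + Real.sin (s / r) = 0} = (fun θ => θ * r) '' Sθ := by
    ext s
    simp only [Set.mem_image, Set.mem_setOf_eq, Set.mem_Ico, hSθ]
    constructor
    · rintro ⟨⟨hs0, hs2⟩, heq⟩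
      refine ⟨s / r, ⟨⟨div_nonneg hs0 hr.le, ?_⟩, by rw [← ha, ← hd] at heq; linarith⟩,
        div_mul_cancel₀ s hr.ne'⟩
      rw [div_lt_iff₀ hr]; linarith
    · rintro ⟨θ, ⟨⟨hθ0, hθ2⟩, heq⟩, rfl⟩
      have hθr : θ * r / r = θ := by field_simp
      refine ⟨⟨mul_nonneg hθ0 hr.le, by
        calc θ * r < 2 * π * r := mul_lt_mul_of_pos_right hθ2 hr
          _ = 2 * π * r := rfl⟩, ?_⟩
      rw [hθr, ← ha, ← hd]; linarith
  rw [hset]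
  rw [Set.InjOn.encard_image, hcard]
  intro θ₁ _ θ₂ _ h
  exact mul_right_cancel₀ hr.ne' h
end

section
/- Let β be a unit-speed plane curve with curvature κ, T_β(r) its tube of radius r, and m ≠ 0. A curve γ_v (v constant) of the tube is a normal flowline of the Gaussian magnetic field (G/m)Ω₂ if and only if cot(v) = −rm; in particular there exist exactly two values of v ∈ [0,2π) giving normal magnetic longitude curves. -/
open Real

/-- On the tube of radius `r > 0` around a unit-speed plane curve of curvature
`κ`, the longitude curve `γ_v` (with `1 - rκcos v > 0` and `κ ≠ 0` along it)
is a normal flowline of the Gaussian magnetic field `(G/m) Ω₂`, `m ≠ 0` — i.e.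
`κ_v = G/m` with `κ_v = κ sin v/(1-rκcos v)` and
`G = -κ cos v/(r(1-rκcos v))` — iff `cot v = -rm` (equivalently
`cos v = -rm sin v`); and this equation has exactly two solutions
`v ∈ [0,2π)`. -/
theorem tube_GMF_longitudes
    (r m : ℝ) (hr : 0 < r) (hm : m ≠ 0) :
    (∀ κ v : ℝ, κ ≠ 0 → 1 - r * κ * Real.cos v > 0 →
      (κ * Real.sin v / (1 - r * κ * Real.cos v) =
          (-(κ * Real.cos v) / (r * (1 - r * κ * Real.cos v))) / m ↔
        Real.cos v = -(r * m) * Real.sin v)) ∧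
    {v ∈ Set.Ico 0 (2 * π) | Real.cos v = -(r * m) * Real.sin v}.encard = 2 := by
  constructor
  · intro κ v hκ hD
    have hD' : 1 - r * κ * Real.cos v ≠ 0 := ne_of_gt hD
    rw [div_div, div_eq_div_iff hD' (mul_ne_zero (mul_ne_zero (ne_of_gt hr) hD') hm)]
    constructor
    · intro h
      have h2 : (κ * (1 - r * κ * Real.cos v)) * (Real.sin v * (r * m) + Real.cos v) = 0 := by
        linear_combination h
      rcases mul_eq_zero.mp h2 with h3 | h3
      · exact absurd h3 (mul_ne_zero hκ hD')
      · linarith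
    · intro h
      linear_combination (κ * (1 - r * κ * Real.cos v)) * h
  · have hrm : r * m ≠ 0 := mul_ne_zero (ne_of_gt hr) hm
    set a := Real.arctan (-1 / (r * m)) with ha_def
    have ht : -1 / (r * m) ≠ 0 := by
      simp [hrm]
    have ha_ne : a ≠ 0 := by
      intro h
      apply ht
      have := Real.tan_arctan (-1 / (r * m))
      rw [← ha_def, h, Real.tan_zero] at this
      exact this.symm
    have ha_lt : a < π / 2 := Real.arctan_lt_pi_div_two _
    have ha_gt : -(π / 2) < a := Real.neg_pi_div_two_lt_arctan _
    have heq_a : Real.cos a = -(r * m) * Real.sin a := by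
      rw [ha_def, Real.cos_arctan, Real.sin_arctan]
      have hs : Real.sqrt (1 + (-1 / (r * m)) ^ 2) ≠ 0 := by positivity
      field_simp
    have hpi := Real.pi_pos
    set v₀ : ℝ := if 0 < a then a else a + π with hv₀_def
    have hv₀_pos : 0 < v₀ := by
      rw [hv₀_def]; split_ifs with h
      · exact h
      · push_neg at h; linarith
    have hv₀_lt : v₀ < π := by
      rw [hv₀_def]; split_ifs with h
      · linarith
      · push_neg at h
        have : a < 0 := lt_of_le_of_ne h ha_ne
        linarith
    have heq_v₀ : Real.cos v₀ = -(r * m) * Real.sin v₀ := by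
      rw [hv₀_def]; split_ifs with h
      · exact heq_a
      · rw [Real.cos_add_pi, Real.sin_add_pi, heq_a]; ring
    have hset : {v ∈ Set.Ico 0 (2 * π) | Real.cos v = -(r * m) * Real.sin v}
        = {v₀, v₀ + π} := by
      ext v
      simp only [Set.mem_setOf_eq, Set.mem_Ico, Set.mem_insert_iff, Set.mem_singleton_iff]
      constructor
      · rintro ⟨⟨hv0, hv2⟩, heq⟩
        have hsin : Real.sin (v - v₀) = 0 := by
          rw [Real.sin_sub, heq, heq_v₀]; ring
        rw [Real.sin_eq_zero_iff] at hsin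
        obtain ⟨n, hn⟩ := hsin
        have h1 : -π < (n : ℝ) * π := by rw [hn]; linarith
        have h2 : (n : ℝ) * π < 2 * π := by rw [hn]; linarith
        have hn1 : -1 < (n : ℝ) := by
          by_contra h
          push_neg at h
          nlinarith
        have hn2 : (n : ℝ) < 2 := by
          by_contra h
          push_neg at h
          nlinarith
        have hn1' : (0 : ℤ) ≤ n := by
          have : (-1 : ℤ) < n := by exact_mod_cast hn1
          omega
        have hn2' : n ≤ 1 := by
          have : n < 2 := by exact_mod_cast hn2
          omega
        interval_cases n
        · left; simp at hn; linarith
        · right; push_cast at hn; linarith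
      · rintro (rfl | rfl)
        · exact ⟨⟨le_of_lt hv₀_pos, by linarith⟩, heq_v₀⟩
        · refine ⟨⟨by linarith, by linarith⟩, ?_⟩
          rw [Real.cos_add_pi, Real.sin_add_pi, heq_v₀]; ring
    rw [hset]
    rw [Set.encard_pair (by intro h; linarith [hpi])]
end
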